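/- Every element of RP_n can be written as a product of the generators r_i (1 ≤ i ≤ n−1) and p_i (1 ≤ i ≤ n). Specifically, if d ∈ RP_n has top set {a_1 < ... < a_k} and bottom set {b_1 < ... < b_k}, then d equals the product (over i = 1,...,k) of R_{b_i}^{a_i} := r_{a_i−1}·r_{a_i−2}···r_{b_i}, followed by the product of p_i over all i not in the bottom set. -/

import Mathlib

/-- A partial map on `Fin n`, representing a rook-type diagram: the function
goes from the top row of vertices to the bottom row. -/
abbrev PMap (n : ℕ) := Fin n → Option (Fin n)

/-- Diagram multiplication `f ⬝ g`: stack `f` on top of `g`, i.e. apply `f` first. -/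
def pcomp {n : ℕ} (f g : PMap n) : PMap n := fun i => (f i).bind g

/-- The identity diagram. -/
def pid (n : ℕ) : PMap n := fun i => some i

infixl:70 " ⬝ " => pcomp

/-- The generator `r i` (0-indexed): sends vertex `i+1` on top to vertex `i`
on the bottom, is undefined at `i`, and fixes all other vertices. -/
def rmap (n i : ℕ) : PMap n := fun j =>
  if (j : ℕ) = i then none
  else if (j : ℕ) = i + 1 then (if h : i < n then some ⟨i, h⟩ else none)
  else some j

/-- The generator `l i` (0-indexed): sends vertex `i` on top to vertex `i+1`
on the bottom, is undefined at `i+1`, and fixes all other vertices. -/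
def lmap (n i : ℕ) : PMap n := fun j =>
  if (j : ℕ) = i + 1 then none
  else if (j : ℕ) = i then (if h : i + 1 < n then some ⟨i + 1, h⟩ else none)
  else some j

/-- The idempotent `p i` (0-indexed): the partial identity undefined at vertex `i`. -/
def pmapd (n i : ℕ) : PMap n := fun j =>
  if (j : ℕ) = i then none else some j

/-- `f` is a partial injection. -/
def IsInj {n : ℕ} (f : PMap n) : Prop :=
  ∀ i j a, f i = some a → f j = some a → i = j

/-- `f` is order-preserving on its domain. -/
def IsOrd {n : ℕ} (f : PMap n) : Prop :=
  ∀ i j a b, f i = some a → f j = some b → i < j → a < b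

/-- Right-planar condition: each bottom endpoint is weakly to the left of its top endpoint. -/
def IsRtop {n : ℕ} (f : PMap n) : Prop := ∀ i a, f i = some a → a ≤ i

/-- Left-planar condition: each bottom endpoint is weakly to the right of its top endpoint. -/
def IsLtop {n : ℕ} (f : PMap n) : Prop := ∀ i a, f i = some a → i ≤ a

/-- The top (domain) set of a diagram. -/
def domF {n : ℕ} (f : PMap n) : Finset (Fin n) :=
  Finset.univ.filter (fun i => (f i).isSome)

/-- The bottom (range) set of a diagram. -/
def ranF {n : ℕ} (f : PMap n) : Finset (Fin n) :=
  Finset.univ.filter (fun j => ∃ i, f i = some j)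

/-- The left-to-right product of a list of diagrams. -/
def listPComp (n : ℕ) (L : List (PMap n)) : PMap n := L.foldr pcomp (pid n)

/-- `Rword n a b = r_{a-1} · r_{a-2} ⋯ r_b` (and the identity when `a = b`). -/
def Rword (n a b : ℕ) : PMap n :=
  listPComp n ((List.range (a - b)).map (fun k => rmap n (a - 1 - k)))

/-!
Read left to right, `R_{b}^{a} = r_{a-1} ⋯ r_b` sends `a` to `b`, kills `b, …, a-1` and fixes every
point below `b` or above `a`. With `a₁ < ⋯ < a_k` and `b₁ < ⋯ < b_k`, the point `a_i` is fixed by the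
factors before `R_{b_i}^{a_i}` (their tops are smaller) and `b_i` by those after it (their bottoms
are larger), so the product of the `R`'s agrees with `d` on its domain. This product is injective,
so any other point that survives it lands outside the bottom set of `d`, where the `p`'s kill it.
-/

section Composition

variable {n : ℕ}

@[simp]
lemma pcomp_apply (f g : PMap n) (i : Fin n) : (f ⬝ g) i = (f i).bind g := rfl

@[simp]
lemma pid_apply (i : Fin n) : pid n i = some i := rfl

lemma pcomp_assoc (f g h : PMap n) : (f ⬝ g) ⬝ h = f ⬝ (g ⬝ h) := by
  funext i; simp only [pcomp_apply]; cases f i <;> rfl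

lemma pcomp_pid (f : PMap n) : f ⬝ pid n = f := by
  funext i; simp only [pcomp_apply]; cases f i <;> rfl

lemma listPComp_nil : listPComp n [] = pid n := rfl

lemma listPComp_cons (g : PMap n) (L : List (PMap n)) :
    listPComp n (g :: L) = g ⬝ listPComp n L := rfl

lemma listPComp_append (L₁ L₂ : List (PMap n)) :
    listPComp n (L₁ ++ L₂) = listPComp n L₁ ⬝ listPComp n L₂ := by
  induction L₁ with
  | nil => rfl
  | cons g L ih => rw [List.cons_append, listPComp_cons, listPComp_cons, ih, pcomp_assoc]

lemma IsInj.pcomp {f g : PMap n} (hf : IsInj f) (hg : IsInj g) : IsInj (f ⬝ g) := by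
  intro i j a hi hj
  obtain ⟨x, hix, hxa⟩ := Option.bind_eq_some_iff.mp hi
  obtain ⟨y, hjy, hya⟩ := Option.bind_eq_some_iff.mp hj
  obtain rfl := hg x y a hxa hya
  exact hf i j x hix hjy

lemma isInj_listPComp {L : List (PMap n)} (hL : ∀ g ∈ L, IsInj g) : IsInj (listPComp n L) := by
  induction L with
  | nil => intro i j a hi hj; exact (Option.some.inj hi).trans (Option.some.inj hj).symm
  | cons g L ih =>
    simp only [List.forall_mem_cons] at hL
    exact hL.1.pcomp (ih hL.2)

end Composition

section Generators

variable {n : ℕ}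

lemma rmap_apply (i : ℕ) (j : Fin n) :
    rmap n i j = if (j : ℕ) = i then none
      else if h : (j : ℕ) = i + 1 then some ⟨i, by have := j.isLt; omega⟩ else some j := by
  unfold rmap
  split_ifs <;> first | rfl | omega

lemma isInj_rmap (i : ℕ) : IsInj (rmap n i) := by
  intro x y a hx hy
  rw [rmap_apply] at hx hy
  split_ifs at hx hy <;> cases hx <;> cases hy <;> ext <;> simp_all

lemma listPComp_map_pmapd_apply (B : List (Fin n)) (c : Fin n) :
    listPComp n (B.map fun b : Fin n => pmapd n b) c = if c ∈ B then none else some c := by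
  induction B with
  | nil => rfl
  | cons b B ih =>
    by_cases hcb : c = b
    · simp [listPComp_cons, pmapd, hcb]
    · simp [listPComp_cons, pmapd, Fin.val_ne_of_ne hcb, hcb, ih]

end Generators

section Rword

variable {n : ℕ}

lemma Rword_self (b : ℕ) : Rword n b b = pid n := by
  simp [Rword, listPComp_nil]

lemma Rword_succ {a b : ℕ} (hb : b ≤ a) : Rword n (a + 1) b = rmap n a ⬝ Rword n a b := by
  rw [Rword, Rword, Nat.add_sub_cancel, Nat.succ_sub hb, List.range_succ_eq_map, List.map_cons,
    List.map_map, listPComp_cons, Nat.sub_zero]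
  congr 3
  funext k
  exact congrArg (rmap n) (by omega)

lemma Rword_apply {a b : ℕ} (hb : b ≤ a) (ha : a < n) (j : Fin n) :
    Rword n a b j = if (j : ℕ) = a then some ⟨b, by omega⟩
      else if b ≤ (j : ℕ) ∧ (j : ℕ) < a then none else some j := by
  induction a, hb using Nat.le_induction generalizing j with
  | base =>
    rw [Rword_self, pid_apply]
    split_ifs with h
    · exact congrArg some (Fin.ext h)
    · omega
    · rfl
  | succ a hb ih =>
    rw [Rword_succ hb, pcomp_apply, rmap_apply]
    have ih := ih (by omega)
    split_ifs <;> simp_all <;> omega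

lemma Rword_apply_self {a b : Fin n} (hba : b ≤ a) : Rword n a b a = some b := by
  simp [Rword_apply (Fin.le_iff_val_le_val.mp hba) a.isLt]

lemma Rword_apply_of_lt {a b j : Fin n} (hba : b ≤ a) (hjb : j < b) : Rword n a b j = some j := by
  rw [Rword_apply (Fin.le_iff_val_le_val.mp hba) a.isLt, if_neg, if_neg] <;> omega

lemma Rword_apply_of_gt {a b j : Fin n} (hba : b ≤ a) (haj : a < j) : Rword n a b j = some j := by
  rw [Rword_apply (Fin.le_iff_val_le_val.mp hba) a.isLt, if_neg, if_neg] <;> omega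

lemma isInj_Rword (a b : ℕ) : IsInj (Rword n a b) :=
  isInj_listPComp (by simpa using fun k _ => isInj_rmap _)

end Rword

section RwordProd

variable {n : ℕ} {f : PMap n}

lemma mem_domF {a : Fin n} : a ∈ domF f ↔ (f a).isSome := by
  simp [domF]

lemma mem_ranF {b : Fin n} : b ∈ ranF f ↔ ∃ a, f a = some b := by
  simp [ranF]

variable (f) in
def rwordProd (A : List (Fin n)) : PMap n :=
  listPComp n (A.map fun a : Fin n => Rword n a ((f a).getD a))

lemma rwordProd_cons (a : Fin n) (A : List (Fin n)) :
    rwordProd f (a :: A) = Rword n a ((f a).getD a) ⬝ rwordProd f A := rfl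

lemma isInj_rwordProd (A : List (Fin n)) : IsInj (rwordProd f A) :=
  isInj_listPComp (by simpa using fun a _ => isInj_Rword _ _)

lemma rwordProd_apply_of_lt (hrt : IsRtop f) {A : List (Fin n)} {j : Fin n}
    (hj : ∀ a ∈ A, ∃ b, f a = some b ∧ j < b) : rwordProd f A j = some j := by
  induction A with
  | nil => rfl
  | cons a A ih =>
    simp only [List.forall_mem_cons] at hj
    obtain ⟨⟨b, hfa, hjb⟩, hj⟩ := hj
    rw [rwordProd_cons, pcomp_apply, hfa, Option.getD_some, Rword_apply_of_lt (hrt a b hfa) hjb,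
      Option.bind_some, ih hj]

lemma rwordProd_apply_of_mem (hord : IsOrd f) (hrt : IsRtop f) {A : List (Fin n)}
    (hA : A.Pairwise (· < ·)) (hdom : ∀ a ∈ A, (f a).isSome) {a : Fin n} (ha : a ∈ A) :
    rwordProd f A a = f a := by
  induction A with
  | nil => simp at ha
  | cons a₁ A ih =>
    rw [List.pairwise_cons] at hA
    simp only [List.forall_mem_cons] at hdom
    obtain ⟨b₁, hb₁⟩ := Option.isSome_iff_exists.mp hdom.1
    rw [rwordProd_cons, pcomp_apply, hb₁, Option.getD_some]
    rcases List.mem_cons.mp ha with rfl | ha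
    · rw [Rword_apply_self (hrt a b₁ hb₁), Option.bind_some, hb₁]
      refine rwordProd_apply_of_lt hrt fun a' ha' => ?_
      obtain ⟨b', hb'⟩ := Option.isSome_iff_exists.mp (hdom.2 a' ha')
      exact ⟨b', hb', hord a a' b₁ b' hb₁ hb' (hA.1 a' ha')⟩
    · rw [Rword_apply_of_gt (hrt a₁ b₁ hb₁) (hA.1 a ha), Option.bind_some, ih hA.2 hdom.2 ha]

end RwordProd

section Factorization

variable {n : ℕ} {f : PMap n}

lemma eq_rwordProd_pcomp_pmapd (hord : IsOrd f) (hrt : IsRtop f) :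
    f = rwordProd f ((domF f).sort (· ≤ ·)) ⬝
      listPComp n ((((ranF f)ᶜ).sort (· ≤ ·)).map fun b : Fin n => pmapd n b) := by
  set A := (domF f).sort (· ≤ ·)
  have hmemA (a : Fin n) : a ∈ A ↔ (f a).isSome := by simp [A, mem_domF]
  have hP (a : Fin n) (ha : (f a).isSome) : rwordProd f A a = f a :=
    rwordProd_apply_of_mem hord hrt (Finset.sortedLT_sort _).pairwise (fun a => (hmemA a).1)
      ((hmemA a).2 ha)
  funext j
  simp only [pcomp_apply, listPComp_map_pmapd_apply, Finset.mem_sort, Finset.mem_compl, mem_ranF]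
  cases hfj : f j with
  | some b => simpa [hP j (by simp [hfj]), hfj] using ⟨j, hfj⟩
  | none =>
    cases hPj : rwordProd f A j with
    | none => rfl
    | some c =>
      -- `j` is outside the domain, so by injectivity of the product it cannot reach the range
      rw [Option.bind_some, if_pos]
      rintro ⟨a, hfa⟩
      have hPa : rwordProd f A a = some c := (hP a (by simp [hfa])).trans hfa
      obtain rfl := isInj_rwordProd A j a c hPj hPa
      simp [hfj] at hfa

end Factorization

def IsGenerator (n : ℕ) (g : PMap n) : Prop :=
  (∃ i, i + 1 < n ∧ g = rmap n i) ∨ (∃ i, i < n ∧ g = pmapd n i)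

def IsGeneratorProduct (n : ℕ) (g : PMap n) : Prop :=
  ∃ L : List (PMap n), (∀ g ∈ L, IsGenerator n g) ∧ g = listPComp n L

section Generation

variable {n : ℕ}

lemma IsGenerator.isGeneratorProduct {g : PMap n} (hg : IsGenerator n g) :
    IsGeneratorProduct n g :=
  ⟨[g], by simpa using hg, (pcomp_pid g).symm⟩

lemma IsGeneratorProduct.pcomp {g h : PMap n} (hg : IsGeneratorProduct n g)
    (hh : IsGeneratorProduct n h) : IsGeneratorProduct n (g ⬝ h) := by
  obtain ⟨L, hL, rfl⟩ := hg
  obtain ⟨M, hM, rfl⟩ := hh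
  exact ⟨L ++ M, fun g hg => (List.mem_append.mp hg).elim (hL g) (hM g),
    (listPComp_append L M).symm⟩

lemma isGeneratorProduct_listPComp {L : List (PMap n)} (hL : ∀ g ∈ L, IsGeneratorProduct n g) :
    IsGeneratorProduct n (listPComp n L) := by
  induction L with
  | nil => exact ⟨[], by simp, rfl⟩
  | cons g L ih =>
    simp only [List.forall_mem_cons] at hL
    exact hL.1.pcomp (ih hL.2)

lemma isGeneratorProduct_Rword {a : ℕ} (ha : a < n) (b : ℕ) :
    IsGeneratorProduct n (Rword n a b) := by
  refine ⟨_, ?_, rfl⟩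
  simp only [List.mem_map, List.mem_range]
  rintro _ ⟨k, hk, rfl⟩
  exact .inl ⟨_, by omega, rfl⟩

lemma isGeneratorProduct_rwordProd (f : PMap n) (A : List (Fin n)) :
    IsGeneratorProduct n (rwordProd f A) :=
  isGeneratorProduct_listPComp (by simpa using fun a _ => isGeneratorProduct_Rword a.isLt _)

lemma isGeneratorProduct_pmapd (b : Fin n) : IsGeneratorProduct n (pmapd n b) :=
  IsGenerator.isGeneratorProduct (.inr ⟨b, b.isLt, rfl⟩)

end Generation

theorem rp_generated_by_r_p_general (n : ℕ) (f : PMap n)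
    (h2 : IsOrd f) (h3 : IsRtop f) :
    (∃ L : List (PMap n),
        (∀ g ∈ L, (∃ i, i + 1 < n ∧ g = rmap n i) ∨ (∃ i, i < n ∧ g = pmapd n i)) ∧
        f = listPComp n L) ∧
    f = (listPComp n (((domF f).sort (· ≤ ·)).map
          (fun (a : Fin n) => Rword n (↑a) (↑((f a).getD a))))) ⬝
        (listPComp n ((((ranF f)ᶜ).sort (· ≤ ·)).map (fun (b : Fin n) => pmapd n (↑b)))) := by
  have hfactor := eq_rwordProd_pcomp_pmapd h2 h3
  refine ⟨?_, hfactor⟩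
  rw [hfactor]
  exact (isGeneratorProduct_rwordProd f _).pcomp
    (isGeneratorProduct_listPComp (by simpa using fun b _ => isGeneratorProduct_pmapd b))

/-- Every element of `RP_n` is a product of the generators `r_i` and `p_i`; specifically,
if `d` has top set `{a_1 < ⋯ < a_k}` and bottom set `{b_1 < ⋯ < b_k}` (with `b_i = d(a_i)`),
then `d = (∏_{i=1}^k R_{b_i}^{a_i}) · (∏_{i ∉ bottom set} p_i)`. -/
theorem rp_generated_by_r_p (n : ℕ) (f : PMap n)
    (h1 : IsInj f) (h2 : IsOrd f) (h3 : IsRtop f) :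
    (∃ L : List (PMap n),
        (∀ g ∈ L, (∃ i, i + 1 < n ∧ g = rmap n i) ∨ (∃ i, i < n ∧ g = pmapd n i)) ∧
        f = listPComp n L) ∧
    f = (listPComp n (((domF f).sort (· ≤ ·)).map
          (fun (a : Fin n) => Rword n (↑a) (↑((f a).getD a))))) ⬝
        (listPComp n ((((ranF f)ᶜ).sort (· ≤ ·)).map (fun (b : Fin n) => pmapd n (↑b)))) :=
  rp_generated_by_r_p_general n f h2 h3
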